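/- arXiv:1504.04616 — 5 statements merged into one kernel-verified Lean document; each statement's English description precedes it below -/
import Mathlib

section
/- For every n ≥ 1, let ψ be the bijection from balanced bipartite graphs with parts V_s = V_p = Fin n to digraphs on vertex set Fin n, defined by: ψ(G) = (Fin n, A) where (i,j) ∈ A if and only if (i_s, j_p) ∈ E(G). Then for every balanced bipartite graph G with at least one edge, r(G) < r(ψ(G)) ≤ 2·r(G) + 1, where the first readability is the bipartite readability of G and the second is the digraph readability of ψ(G). -/
/-!
Given an injective overlap labeling of length `d`, label each source by its label without the
first letter and each sink by its label without the last letter: the overlaps of these strings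
of length `d - 1` are exactly the proper overlaps (of length `< d`) of the original labels,
so `r(G) ≤ r(ψ G) - 1`, and `r(ψ G) ≥ 1` as soon as there is an arc.

Conversely, from an overlap labeling `(s, p)` of `G` of length `r`, the labels
`p(w) ++ [#w] ++ s(w)`, with a letter `#w` unique to `w` and foreign to `s` and `p`, are
injective of length `2r + 1`, and a proper overlap of such labels longer than `r` would have to
match `#u` against a letter of `p(v)`; so the proper overlaps are exactly those of `s(u)` with
`p(v)`. That `r(G)` is attained at all follows by adding the edges one at a time, each step
turning a labeling of length `r` into one of length `2r + 1`.
-/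

namespace Readability

/-- `x` overlaps `y` by `i`: `1 ≤ i ≤ min |x| |y|` and the length-`i` suffix of `x`
equals the length-`i` prefix of `y`. -/
def OverlapsBy {α : Type*} (x y : List α) (i : ℕ) : Prop :=
  1 ≤ i ∧ i ≤ min x.length y.length ∧ x.drop (x.length - i) = y.take i

/-- `ov x y`: the minimum `i` such that `x` overlaps `y` by `i`, or `0` if none exists. -/
noncomputable def ov {α : Type*} (x y : List α) : ℕ := sInf {i | OverlapsBy x y i}

/-- An overlap labeling of length `r` of the bipartite graph with parts `Vs`, `Vp` and
edge relation `E ⊆ Vs × Vp`. -/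
def IsOverlapLabeling {α Vs Vp : Type*} (E : Vs → Vp → Prop) (r : ℕ)
    (ls : Vs → List α) (lp : Vp → List α) : Prop :=
  (∀ u, (ls u).length = r) ∧ (∀ v, (lp v).length = r) ∧
    ∀ u v, E u v ↔ ∃ i, OverlapsBy (ls u) (lp v) i

/-- Bipartite readability: the least `r` admitting an overlap labeling of length `r`
(over the alphabet `ℕ`). -/
noncomputable def bReadability {Vs Vp : Type*} (E : Vs → Vp → Prop) : ℕ :=
  sInf {r | ∃ (ls : Vs → List ℕ) (lp : Vp → List ℕ), IsOverlapLabeling E r ls lp}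

/-- An injective overlap labeling of length `r` of the digraph with arc relation `A`. -/
def IsInjOverlapLabeling {V : Type*} (A : V → V → Prop) (r : ℕ) (ℓ : V → List ℕ) : Prop :=
  (∀ v, (ℓ v).length = r) ∧ Function.Injective ℓ ∧
    ∀ u v, A u v ↔ 0 < ov (ℓ u) (ℓ v) ∧ ov (ℓ u) (ℓ v) < r

/-- Digraph readability: the least `r` admitting an injective overlap labeling of length `r`. -/
noncomputable def dReadability {V : Type*} (A : V → V → Prop) : ℕ :=
  sInf {r | ∃ ℓ : V → List ℕ, IsInjOverlapLabeling A r ℓ}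

/-- A decomposition of size `k`: a weight function on edges with values in `{1,…,k}`. -/
def IsDecomposition {Vs Vp : Type*} (E : Vs → Vp → Prop) (k : ℕ) (w : Vs → Vp → ℕ) : Prop :=
  ∀ u v, E u v → 1 ≤ w u v ∧ w u v ≤ k

/-- An induced `P₄` with consecutive edges `(s1,p1), (s2,p1), (s2,p2)`. -/
def InducedP4 {Vs Vp : Type*} (E : Vs → Vp → Prop) (s1 s2 : Vs) (p1 p2 : Vp) : Prop :=
  s1 ≠ s2 ∧ p1 ≠ p2 ∧ E s1 p1 ∧ E s2 p1 ∧ E s2 p2 ∧ ¬ E s1 p2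

/-- The `P₄`-rule: on each induced `P₄`, if the middle edge has maximum weight then its weight
is at least the sum of the weights of the two outer edges. -/
def SatisfiesP4Rule {Vs Vp : Type*} (E : Vs → Vp → Prop) (w : Vs → Vp → ℕ) : Prop :=
  ∀ s1 s2 p1 p2, InducedP4 E s1 s2 p1 p2 →
    w s2 p1 = max (w s1 p1) (max (w s2 p1) (w s2 p2)) →
    w s1 p1 + w s2 p2 ≤ w s2 p1

/-- The strict `P₄`-rule: as the `P₄`-rule, with strict inequality. -/
def SatisfiesStrictP4Rule {Vs Vp : Type*} (E : Vs → Vp → Prop) (w : Vs → Vp → ℕ) : Prop :=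
  ∀ s1 s2 p1 p2, InducedP4 E s1 s2 p1 p2 →
    w s2 p1 = max (w s1 p1) (max (w s2 p1) (w s2 p2)) →
    w s1 p1 + w s2 p2 < w s2 p1

/-- `C₄`-freeness of a bipartite graph. -/
def C4Free {Vs Vp : Type*} (E : Vs → Vp → Prop) : Prop :=
  ∀ (s1 s2 : Vs) (p1 p2 : Vp), s1 ≠ s2 → p1 ≠ p2 →
    ¬ (E s1 p1 ∧ E s1 p2 ∧ E s2 p1 ∧ E s2 p2)

/-- The subgraph `G_i` of a decomposition: edges of weight exactly `i`. -/
def SubAt {Vs Vp : Type*} (E : Vs → Vp → Prop) (w : Vs → Vp → ℕ) (i : ℕ) :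
    Vs → Vp → Prop :=
  fun u v => E u v ∧ w u v = i

/-- A bipartite edge relation is a disjoint union of bicliques iff it has no induced `P₄`,
i.e. whenever `(s1,p1), (s2,p1), (s2,p2)` are edges, so is `(s1,p2)`. -/
def BicliqueUnion {Vs Vp : Type*} (H : Vs → Vp → Prop) : Prop :=
  ∀ s1 s2 p1 p2, H s1 p1 → H s2 p1 → H s2 p2 → H s1 p2

/-- The HUB-rule for a decomposition `w`:
(i) every level graph `G_i` is a disjoint union of bicliques, and
(ii) non-isolated twins in `G_i` (for `i ≥ 2`) are twins in every `G_j` with `1 ≤ j ≤ i-1`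
(stated for both parts of the bipartition). -/
def SatisfiesHUBRule {Vs Vp : Type*} (E : Vs → Vp → Prop) (w : Vs → Vp → ℕ) : Prop :=
  (∀ i, 1 ≤ i → BicliqueUnion (SubAt E w i)) ∧
  (∀ i, 2 ≤ i → ∀ u v : Vs, u ≠ v → (∃ p, SubAt E w i u p) →
      (∀ p, SubAt E w i u p ↔ SubAt E w i v p) →
      ∀ j, 1 ≤ j → j ≤ i - 1 → ∀ p, SubAt E w j u p ↔ SubAt E w j v p) ∧
  (∀ i, 2 ≤ i → ∀ u v : Vp, u ≠ v → (∃ s, SubAt E w i s u) →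
      (∀ s, SubAt E w i s u ↔ SubAt E w i s v) →
      ∀ j, 1 ≤ j → j ≤ i - 1 → ∀ s, SubAt E w j s u ↔ SubAt E w j s v)

/-- The HUB number: minimum size of a decomposition satisfying the HUB-rule. -/
noncomputable def hubNumber {Vs Vp : Type*} (E : Vs → Vp → Prop) : ℕ :=
  sInf {k | ∃ w, IsDecomposition E k w ∧ SatisfiesHUBRule E w}

/-- The underlying undirected simple graph on `Vs ⊕ Vp` of a bipartite graph. -/
def underlyingGraph {Vs Vp : Type*} (E : Vs → Vp → Prop) : SimpleGraph (Vs ⊕ Vp) where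
  Adj x y := (∃ u v, x = Sum.inl u ∧ y = Sum.inr v ∧ E u v) ∨
    (∃ u v, x = Sum.inr v ∧ y = Sum.inl u ∧ E u v)
  symm := by
    constructor
    rintro x y (⟨u, v, rfl, rfl, h⟩ | ⟨u, v, rfl, rfl, h⟩)
    · exact Or.inr ⟨u, v, rfl, rfl, h⟩
    · exact Or.inl ⟨u, v, rfl, rfl, h⟩
  loopless := by
    constructor
    rintro x (⟨u, v, h1, h2, -⟩ | ⟨u, v, h1, h2, -⟩) <;> subst h1 <;> simp_all

/-- The radius of a graph: the least `r` such that some vertex has eccentricity at most `r`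
(for a finite connected graph this is `min_u max_v dist(u,v)`). -/
noncomputable def graphRadius {V : Type*} (G : SimpleGraph V) : ℕ :=
  sInf {r | ∃ u, ∀ v, G.dist u v ≤ r}

/-- Distinctness of two vertices `u, v` of the same part (here the `Vs`-part, with
neighborhoods taken in `Vp`): `max(|N(u)∖N(v)|, |N(v)∖N(u)|)`. -/
noncomputable def DTpair {Vs Vp : Type*} (E : Vs → Vp → Prop) (u v : Vs) : ℕ :=
  max {p : Vp | E u p ∧ ¬ E v p}.ncard {p : Vp | E v p ∧ ¬ E u p}.ncard

/-- Distinctness of a bipartite graph: the minimum of `DT(u,v)` over pairs of distinct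
vertices in the same part. -/
noncomputable def distinctness {Vs Vp : Type*} (E : Vs → Vp → Prop) : ℕ :=
  sInf ({d | ∃ u v : Vs, u ≠ v ∧ d = DTpair E u v} ∪
        {d | ∃ u v : Vp, u ≠ v ∧ d = DTpair (fun p s => E s p) u v})

/-- A bipartite graph fails to be a matching iff some vertex has degree at least 2. -/
def NotMatching {Vs Vp : Type*} (E : Vs → Vp → Prop) : Prop :=
  (∃ u : Vs, ∃ p1 p2 : Vp, p1 ≠ p2 ∧ E u p1 ∧ E u p2) ∨
  (∃ p : Vp, ∃ u1 u2 : Vs, u1 ≠ u2 ∧ E u1 p ∧ E u2 p)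

section Overlap

variable {α : Type*} {x y : List α} {i : ℕ}

lemma drop_length_sub_append {x₁ x₂ : List α} (hi : i ≤ x₂.length) :
    (x₁ ++ x₂).drop ((x₁ ++ x₂).length - i) = x₂.drop (x₂.length - i) := by
  rw [List.drop_append, List.drop_eq_nil_of_le (by simp; omega), List.nil_append]
  congr 1
  simp only [List.length_append]
  omega

lemma overlapsBy_append_iff {x₁ x₂ y₁ y₂ : List α} (hx : i ≤ x₂.length) (hy : i ≤ y₁.length) :
    OverlapsBy (x₁ ++ x₂) (y₁ ++ y₂) i ↔ OverlapsBy x₂ y₁ i := by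
  rw [OverlapsBy, OverlapsBy, drop_length_sub_append hx, List.take_append_of_le_length hy,
    List.length_append, List.length_append]
  constructor
  · rintro ⟨h1, -, h⟩
    exact ⟨h1, by omega, h⟩
  · rintro ⟨h1, -, h⟩
    exact ⟨h1, by omega, h⟩

lemma overlapsBy_map_iff {β : Type*} {f : α → β} (hf : Function.Injective f) :
    OverlapsBy (x.map f) (y.map f) i ↔ OverlapsBy x y i := by
  simp only [OverlapsBy, List.length_map, ← List.map_drop, ← List.map_take,
    (List.map_injective_iff.mpr hf).eq_iff]

lemma overlapsBy_length_self (hx : x ≠ []) : OverlapsBy x x x.length :=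
  ⟨List.length_pos_iff.mpr hx, by simp, by simp⟩

lemma OverlapsBy.le_length_left (h : OverlapsBy x y i) : i ≤ x.length :=
  h.2.1.trans (min_le_left _ _)

lemma OverlapsBy.le_length_right (h : OverlapsBy x y i) : i ≤ y.length :=
  h.2.1.trans (min_le_right _ _)

lemma OverlapsBy.getElem?_eq (h : OverlapsBy x y i) {k : ℕ} (hk : k < i) :
    x[x.length - i + k]? = y[k]? := by
  have := congrArg (·[k]?) h.2.2
  simpa [List.getElem?_drop, List.getElem?_take, hk] using this

lemma OverlapsBy.mem_left {k : ℕ} {c : α} (h : OverlapsBy x y i) (hk : k < i)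
    (hy : y[k]? = some c) : c ∈ x := by
  rw [← h.getElem?_eq hk] at hy
  exact List.mem_of_getElem? hy

lemma OverlapsBy.mem_right {k : ℕ} {c : α} (h : OverlapsBy x y i) (hk : x.length - i ≤ k)
    (hx : x[k]? = some c) : c ∈ y := by
  have hkx : k < x.length := (List.getElem?_eq_some_iff.mp hx).1
  have hi := h.le_length_left
  rw [show k = x.length - i + (k - (x.length - i)) by omega, h.getElem?_eq (by omega)] at hx
  exact List.mem_of_getElem? hx

lemma ov_pos_and_lt_iff {r : ℕ} : 0 < ov x y ∧ ov x y < r ↔ ∃ i < r, OverlapsBy x y i := by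
  constructor
  · rintro ⟨hpos, hr⟩
    exact ⟨ov x y, hr, Nat.sInf_mem (Nat.nonempty_of_pos_sInf hpos)⟩
  · rintro ⟨i, hr, hi⟩
    have hmin : OverlapsBy x y (ov x y) := Nat.sInf_mem (s := {j | OverlapsBy x y j}) ⟨i, hi⟩
    exact ⟨hmin.1, (Nat.sInf_le hi).trans_lt hr⟩

end Overlap

section Bipartite

variable {Vs Vp : Type*}

lemma IsOverlapLabeling.exists_insert {E : Vs → Vp → Prop} {r : ℕ} {ls : Vs → List ℕ}
    {lp : Vp → List ℕ} (h : IsOverlapLabeling E r ls lp) (p : Vs × Vp) :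
    ∃ (ls' : Vs → List ℕ) (lp' : Vp → List ℕ),
      IsOverlapLabeling (fun u v => (u, v) = p ∨ E u v) (2 * r + 1) ls' lp' := by
  classical
  obtain ⟨hls, hlp, hE⟩ := h
  have henc : Function.Injective (· + 3 : ℕ → ℕ) := add_left_injective 3
  -- Old letters are shifted by 3; `0` pads sources other than `p.1`, `1` pads sinks other than
  -- `p.2`, and `p.1`, `p.2` get the same label, glued around the separator `2`.
  let ls' : Vs → List ℕ := fun u =>
    (if u = p.1 then (lp p.2).map (· + 3) ++ [2] else .replicate (r + 1) 0) ++ (ls u).map (· + 3)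
  let lp' : Vp → List ℕ := fun v =>
    (lp v).map (· + 3) ++ (if v = p.2 then 2 :: (ls p.1).map (· + 3) else .replicate (r + 1) 1)
  have hls' : ∀ u, (ls' u).length = 2 * r + 1 := by
    intro u; by_cases hu : u = p.1 <;> simp [ls', hu, hls, hlp] <;> omega
  have hlp' : ∀ v, (lp' v).length = 2 * r + 1 := by
    intro v; by_cases hv : v = p.2 <;> simp [lp', hv, hls, hlp] <;> omega
  have hshort : ∀ u v i, i ≤ r → (OverlapsBy (ls' u) (lp' v) i ↔ OverlapsBy (ls u) (lp v) i) :=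
    fun u v i hi => (overlapsBy_append_iff (by simp [hls]; omega) (by simp [hlp]; omega)).trans
      (overlapsBy_map_iff henc)
  have hlong : ∀ u v i, (u, v) ≠ p → r < i → ¬ OverlapsBy (ls' u) (lp' v) i := by
    intro u v i huv hri hov
    by_cases hu : u = p.1
    · have hv : v ≠ p.2 := fun hv => huv (Prod.ext hu hv)
      have h1 := hov.mem_left hri (by simp [lp', hv, hlp] : (lp' v)[r]? = some 1)
      simp [ls', hu] at h1
    · have h0 : (ls' u)[r]? = some 0 := by simp [ls', hu, List.getElem?_append_left]
      replace h0 := hov.mem_right (by rw [hls']; omega) h0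
      by_cases hv : v = p.2 <;> simp [lp', hv] at h0
  refine ⟨ls', lp', hls', hlp', fun u v => ⟨?_, ?_⟩⟩
  · rintro (huv | huv)
    · have hsame : ls' u = lp' v := by subst huv; simp [ls', lp']
      refine ⟨2 * r + 1, ?_⟩
      rw [hsame, ← hlp' v]
      exact overlapsBy_length_self (List.ne_nil_of_length_pos (by rw [hlp']; omega))
    · obtain ⟨i, hi⟩ := (hE u v).mp huv
      exact ⟨i, (hshort u v i (hi.le_length_left.trans_eq (hls u))).mpr hi⟩
  · rintro ⟨i, hi⟩
    by_cases huv : (u, v) = p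
    · exact Or.inl huv
    · exact Or.inr ((hE u v).mpr ⟨i, (hshort u v i (not_lt.mp fun hri =>
        hlong u v i huv hri hi)).mp hi⟩)

lemma exists_isOverlapLabeling_mem (F : Finset (Vs × Vp)) :
    ∃ (r : ℕ) (ls : Vs → List ℕ) (lp : Vp → List ℕ),
      IsOverlapLabeling (fun u v => (u, v) ∈ F) r ls lp := by
  classical
  induction F using Finset.induction_on with
  | empty => exact ⟨0, fun _ => [], fun _ => [], by simp [IsOverlapLabeling, OverlapsBy]⟩
  | insert p F _ ih =>
    obtain ⟨r, ls, lp, h⟩ := ih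
    obtain ⟨ls', lp', h'⟩ := h.exists_insert p
    simp only [Finset.mem_insert]
    exact ⟨_, ls', lp', h'⟩

lemma exists_isOverlapLabeling [Finite Vs] [Finite Vp] (E : Vs → Vp → Prop) :
    ∃ (r : ℕ) (ls : Vs → List ℕ) (lp : Vp → List ℕ), IsOverlapLabeling E r ls lp := by
  classical
  have := Fintype.ofFinite Vs
  have := Fintype.ofFinite Vp
  simpa using exists_isOverlapLabeling_mem (Finset.univ.filter fun p : Vs × Vp => E p.1 p.2)

lemma exists_isOverlapLabeling_bReadability [Finite Vs] [Finite Vp] (E : Vs → Vp → Prop) :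
    ∃ (ls : Vs → List ℕ) (lp : Vp → List ℕ), IsOverlapLabeling E (bReadability E) ls lp :=
  Nat.sInf_mem (exists_isOverlapLabeling E)

lemma IsOverlapLabeling.bReadability_le {E : Vs → Vp → Prop} {r : ℕ} {ls : Vs → List ℕ}
    {lp : Vp → List ℕ} (h : IsOverlapLabeling E r ls lp) : bReadability E ≤ r :=
  Nat.sInf_le ⟨ls, lp, h⟩

end Bipartite

section Digraph

variable {V : Type*} {A : V → V → Prop}

lemma IsOverlapLabeling.exists_isInjOverlapLabeling [Countable V] {r : ℕ} {ls lp : V → List ℕ}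
    (h : IsOverlapLabeling A r ls lp) : ∃ ℓ, IsInjOverlapLabeling A (2 * r + 1) ℓ := by
  obtain ⟨e, he⟩ := Countable.exists_injective_nat V
  obtain ⟨hls, hlp, hA⟩ := h
  have henc : Function.Injective (fun c : ℕ => 2 * c + 1) := fun a b hab => by simp_all
  -- The even letter `2 * e w` in the middle identifies `w`; old letters become odd.
  let ℓ : V → List ℕ := fun w => (lp w).map (2 * · + 1) ++ 2 * e w :: (ls w).map (2 * · + 1)
  have hlen : ∀ w, (ℓ w).length = 2 * r + 1 := by intro w; simp [ℓ, hls, hlp]; omega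
  have hmid : ∀ w, (ℓ w)[r]? = some (2 * e w) := by intro w; simp [ℓ, hlp]
  have hshort : ∀ u v i, i ≤ r → (OverlapsBy (ℓ u) (ℓ v) i ↔ OverlapsBy (ls u) (lp v) i) := by
    intro u v i hi
    have hℓu : ℓ u = ((lp u).map (2 * · + 1) ++ [2 * e u]) ++ (ls u).map (2 * · + 1) := by
      simp [ℓ]
    rw [hℓu]
    exact (overlapsBy_append_iff (by simp [hls]; omega) (by simp [hlp]; omega)).trans
      (overlapsBy_map_iff henc)
  have hlong : ∀ u v i, r < i → i < 2 * r + 1 → ¬ OverlapsBy (ℓ u) (ℓ v) i := by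
    intro u v i hri hi hov
    have h := hov.getElem?_eq (k := i - r - 1) (by omega)
    rw [hlen, show 2 * r + 1 - i + (i - r - 1) = r by omega, hmid,
      List.getElem?_append_left (by simp [hlp]; omega)] at h
    obtain ⟨c, -, hc⟩ := List.mem_map.mp (List.mem_of_getElem? h.symm)
    omega
  refine ⟨ℓ, hlen, fun u v huv => he ?_, fun u v => ?_⟩
  · simpa [hmid] using congrArg (·[r]?) huv
  · rw [hA, ov_pos_and_lt_iff]
    constructor
    · rintro ⟨i, hi⟩
      have hir : i ≤ r := hi.le_length_left.trans_eq (hls u)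
      exact ⟨i, by omega, (hshort u v i hir).mpr hi⟩
    · rintro ⟨i, hi, hov⟩
      exact ⟨i, (hshort u v i (not_lt.mp fun hri => hlong u v i hri hi hov)).mp hov⟩

lemma IsInjOverlapLabeling.isOverlapLabeling {d : ℕ} {ℓ : V → List ℕ}
    (h : IsInjOverlapLabeling A d ℓ) :
    IsOverlapLabeling A (d - 1) (fun u => (ℓ u).drop 1) (fun v => (ℓ v).take (d - 1)) := by
  obtain ⟨hlen, -, hA⟩ := h
  have hconv : ∀ u v i, i < d →
      (OverlapsBy (ℓ u) (ℓ v) i ↔ OverlapsBy ((ℓ u).drop 1) ((ℓ v).take (d - 1)) i) := by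
    intro u v i hi
    conv_lhs => rw [← List.take_append_drop 1 (ℓ u), ← List.take_append_drop (d - 1) (ℓ v)]
    exact overlapsBy_append_iff (by simp [hlen]; omega) (by simp [hlen]; omega)
  refine ⟨fun u => by simp [hlen], fun v => by simp [hlen], fun u v => ?_⟩
  rw [hA, ov_pos_and_lt_iff]
  constructor
  · rintro ⟨i, hi, hov⟩
    exact ⟨i, (hconv u v i hi).mp hov⟩
  · rintro ⟨i, hov⟩
    have hid : i < d := by
      have := hov.1
      have : i ≤ d - 1 := hov.le_length_right.trans (by simp)
      omega
    exact ⟨i, hid, (hconv u v i hid).mpr hov⟩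

lemma IsInjOverlapLabeling.dReadability_le {r : ℕ} {ℓ : V → List ℕ}
    (h : IsInjOverlapLabeling A r ℓ) : dReadability A ≤ r :=
  Nat.sInf_le ⟨ℓ, h⟩

lemma IsInjOverlapLabeling.exists_dReadability {r : ℕ} {ℓ : V → List ℕ}
    (h : IsInjOverlapLabeling A r ℓ) : ∃ ℓ', IsInjOverlapLabeling A (dReadability A) ℓ' :=
  Nat.sInf_mem (s := {r | ∃ ℓ, IsInjOverlapLabeling A r ℓ}) ⟨r, ℓ, h⟩

lemma IsInjOverlapLabeling.pos {d : ℕ} {ℓ : V → List ℕ} (h : IsInjOverlapLabeling A d ℓ)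
    {u v : V} (huv : A u v) : 0 < d := by
  have := (h.2.2 u v).mp huv
  omega

end Digraph

theorem statement0_general (n : ℕ) (E : Fin n → Fin n → Prop) (hE : ∃ u v, E u v) :
    bReadability E < dReadability E ∧ dReadability E ≤ 2 * bReadability E + 1 := by
  obtain ⟨ls, lp, hb⟩ := exists_isOverlapLabeling_bReadability E
  obtain ⟨ℓ, hℓ⟩ := hb.exists_isInjOverlapLabeling
  obtain ⟨ℓ', hℓ'⟩ := hℓ.exists_dReadability
  obtain ⟨u, v, huv⟩ := hE
  have hd_pos : 0 < dReadability E := hℓ'.pos huv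
  have hb_le : bReadability E ≤ dReadability E - 1 := hℓ'.isOverlapLabeling.bReadability_le
  exact ⟨by omega, hℓ.dReadability_le⟩

/-- For every `n ≥ 1` and every balanced bipartite graph `G` on parts `Fin n`
with at least one edge, `r(G) < r(ψ(G)) ≤ 2·r(G) + 1`, where `ψ(G)` is the digraph on `Fin n`
with arcs `(i,j)` exactly when `(i_s, j_p)` is an edge of `G`. -/
theorem statement0 (n : ℕ) (hn : 1 ≤ n) (E : Fin n → Fin n → Prop) (hE : ∃ u v, E u v) :
    bReadability E < dReadability E ∧ dReadability E ≤ 2 * bReadability E + 1 :=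
  statement0_general n E hE

end Readability
end

section
/- Let G = (V_s, V_p, E) be a C4-free bipartite graph with at least one edge, and let t = min{ k : there exists a decomposition of G of size k that satisfies the strict P4-rule }. Then t/2 < r(G) ≤ t; more precisely, r(G) ≤ t and t ≤ 2·r(G) − 1. -/
namespace Readability

/-!
For `r(G) ≤ t`, read an edge `(u, v)` of weight `k` as the demand that the last `k` letters of
`u` be the first `k` letters of `v`, and give two letter positions the same symbol exactly when
these demands connect them. Consecutive steps of a repetition-free chain of demands run along an
induced `P₄` whose three overlaps all contain the shared position, so by the strict `P₄`-rule
the weights along the chain can never rise and then fall. Starting just past the last edge of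
`u` lighter than `i`, such a chain can therefore never reach the position of a non-neighbour `v`
that an overlap of length `i` would require.

For `t ≤ 2 r(G) - 1`, weight each edge by `2 a - 1` where `a` is the shortest overlap of its
labels. On an induced `P₄` with shortest overlaps `a, b, c` and `a, c ≤ b < a + c`, the overlaps
compose to an overlap of the non-adjacent ends by `a + c - b`.
-/

section Overlaps

variable {α : Type*}

lemma OverlapsBy.zigzag {x y z p : List α} {r a b c : ℕ}
    (hx : x.length = r) (hy : y.length = r) (hz : z.length = r) (hp : p.length = r)
    (ha : OverlapsBy x y a) (hb : OverlapsBy z y b) (hc : OverlapsBy z p c)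
    (hab : a ≤ b) (hcb : c ≤ b) (hlt : b < a + c) : OverlapsBy x p (a + c - b) := by
  obtain ⟨ha1, ha2, ha3⟩ := ha
  obtain ⟨hb1, hb2, hb3⟩ := hb
  obtain ⟨hc1, hc2, hc3⟩ := hc
  rw [hx, hy, min_self] at ha2
  rw [hz, hy, min_self] at hb2
  rw [hz, hp, min_self] at hc2
  rw [hx] at ha3
  rw [hz] at hb3 hc3
  refine ⟨by omega, by rw [hx, hp, min_self]; omega, ?_⟩
  rw [hx]
  calc x.drop (r - (a + c - b))
      = (x.drop (r - a)).drop (a - (a + c - b)) := by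
        rw [List.drop_drop]; congr 1; omega
    _ = (y.take a).drop (b - c) := by
        rw [ha3]; congr 1; omega
    _ = ((y.take b).take a).drop (b - c) := by
        rw [List.take_take, Nat.min_eq_left hab]
    _ = ((z.drop (r - b)).take a).drop (b - c) := by rw [hb3]
    _ = ((z.drop (r - b)).drop (b - c)).take (a - (b - c)) := by rw [List.drop_take]
    _ = (z.drop (r - c)).take (a - (b - c)) := by
        rw [List.drop_drop, show r - b + (b - c) = r - c by omega]
    _ = (p.take c).take (a - (b - c)) := by rw [hc3]
    _ = p.take (a + c - b) := by
        rw [List.take_take]; congr 1; omega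

lemma overlapsBy_ofFn_iff {k i : ℕ} (f g : ℕ → α) :
    OverlapsBy (List.ofFn fun m : Fin k => f (k - m)) (List.ofFn fun m : Fin k => g (m + 1)) i ↔
      1 ≤ i ∧ i ≤ k ∧ ∀ j t, 1 ≤ j → 1 ≤ t → j + t = i + 1 → f j = g t := by
  simp only [OverlapsBy, List.length_ofFn, min_self, List.ext_getElem_iff, List.length_drop,
    List.length_take, List.getElem_drop, List.getElem_take, List.getElem_ofFn]
  refine and_congr_right fun hi => and_congr_right fun hik =>
    ⟨fun h j t hj ht hjt => ?_,
      fun h => ⟨by omega, fun m hm _ => h _ _ (by omega) (by omega) (by omega)⟩⟩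
  have := h.2 (t - 1) (by omega) (by omega)
  convert this using 2 <;> omega

end Overlaps

section Decompositions

variable {Vs Vp : Type*} {E : Vs → Vp → Prop} {w : Vs → Vp → ℕ}

lemma add_lt_of_satisfiesStrictP4Rule (hC : C4Free E) (hP4 : SatisfiesStrictP4Rule E w)
    {s1 s2 : Vs} {p1 p2 : Vp} (hs : s1 ≠ s2) (hp : p1 ≠ p2)
    (e1 : E s1 p1) (e2 : E s2 p1) (e3 : E s2 p2)
    (h1 : w s1 p1 ≤ w s2 p1) (h3 : w s2 p2 ≤ w s2 p1) : w s1 p1 + w s2 p2 < w s2 p1 :=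
  hP4 s1 s2 p1 p2 ⟨hs, hp, e1, e2, e3, fun e4 => hC s1 s2 p1 p2 hs hp ⟨e1, e4, e2, e3⟩⟩
    (by omega)

lemma two_pow_add_two_pow_lt {a b c : ℕ} (ha : a < b) (hc : c < b) (hac : a ≠ c) :
    2 ^ a + 2 ^ c < 2 ^ b := by
  wlog h : a < c generalizing a c
  · have := this hc ha hac.symm (by omega)
    omega
  have h1 : 2 ^ a < 2 ^ c := Nat.pow_lt_pow_right (by norm_num) h
  have h2 : 2 ^ c * 2 ≤ 2 ^ b := by
    rw [← pow_succ]
    exact Nat.pow_le_pow_right (by norm_num) hc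
  omega

/-- Weigh the pairs by distinct powers of two. -/
theorem exists_strictP4_decomposition [Finite Vs] [Finite Vp] (E : Vs → Vp → Prop) :
    ∃ k w, IsDecomposition E k w ∧ SatisfiesStrictP4Rule E w := by
  obtain ⟨N, ⟨e⟩⟩ := Finite.exists_equiv_fin (Vs × Vp)
  refine ⟨2 ^ N, fun u v => 2 ^ (e (u, v) : ℕ), fun u v _ =>
    ⟨Nat.one_le_two_pow, Nat.pow_le_pow_right (by norm_num) (e (u, v)).is_lt.le⟩, ?_⟩
  rintro s1 s2 p1 p2 ⟨hs, hp, -, -, -, -⟩ hmax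
  have hne : ∀ {x y : Vs × Vp}, x ≠ y → (e x : ℕ) ≠ e y := fun hxy h =>
    hxy (e.injective (Fin.ext h))
  have h1 : (e (s1, p1) : ℕ) ≤ e (s2, p1) :=
    (Nat.pow_le_pow_iff_right (by norm_num)).mp (hmax ▸ le_max_left _ _)
  have h3 : (e (s2, p2) : ℕ) ≤ e (s2, p1) :=
    (Nat.pow_le_pow_iff_right (by norm_num)).mp
      (hmax ▸ (le_max_right _ _).trans (le_max_right _ _))
  exact two_pow_add_two_pow_lt (h1.lt_of_ne (hne (by simp [hs])))
    (h3.lt_of_ne (hne (by simp [hp.symm]))) (hne (by simp [hs]))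

end Decompositions

section LabelingToDecomposition

variable {α Vs Vp : Type*} {E : Vs → Vp → Prop} {r : ℕ}
  {ls : Vs → List α} {lp : Vp → List α}

lemma IsOverlapLabeling.overlapsBy_ov (hl : IsOverlapLabeling E r ls lp) {u : Vs} {v : Vp}
    (huv : E u v) : OverlapsBy (ls u) (lp v) (ov (ls u) (lp v)) :=
  Nat.sInf_mem ((hl.2.2 u v).1 huv)

lemma IsOverlapLabeling.ov_mem_Icc (hl : IsOverlapLabeling E r ls lp) {u : Vs} {v : Vp}
    (huv : E u v) : 1 ≤ ov (ls u) (lp v) ∧ ov (ls u) (lp v) ≤ r := by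
  obtain ⟨h1, h2, -⟩ := hl.overlapsBy_ov huv
  rw [hl.1 u, hl.2.1 v, min_self] at h2
  exact ⟨h1, h2⟩

lemma IsOverlapLabeling.isDecomposition (hl : IsOverlapLabeling E r ls lp) :
    IsDecomposition E (2 * r - 1) fun u v => 2 * ov (ls u) (lp v) - 1 := fun u v huv => by
  have := hl.ov_mem_Icc huv
  dsimp only
  omega

lemma IsOverlapLabeling.satisfiesStrictP4Rule (hl : IsOverlapLabeling E r ls lp) :
    SatisfiesStrictP4Rule E fun u v => 2 * ov (ls u) (lp v) - 1 := by
  rintro s1 s2 p1 p2 ⟨-, -, e1, e2, e3, hne⟩ hmax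
  dsimp only at hmax ⊢
  have := hl.ov_mem_Icc e1
  have := hl.ov_mem_Icc e2
  have := hl.ov_mem_Icc e3
  have hsum : ov (ls s1) (lp p1) + ov (ls s2) (lp p2) ≤ ov (ls s2) (lp p1) := by
    by_contra! hlt
    exact hne ((hl.2.2 s1 p2).2 ⟨_, (hl.overlapsBy_ov e1).zigzag (hl.1 s1) (hl.2.1 p1)
      (hl.1 s2) (hl.2.1 p2) (hl.overlapsBy_ov e2) (hl.overlapsBy_ov e3) (by omega) (by omega)
      hlt⟩)
  omega

end LabelingToDecomposition

section Slots

variable {Vs Vp : Type*}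

/-- `inl (u, j)` stands for the `j`-th letter from the end of the label of `u`, and `inr (v, t)`
for the `t`-th letter of the label of `v`. -/
abbrev Slot (Vs Vp : Type*) := (Vs × ℕ) ⊕ (Vp × ℕ)

def slotIndex : Slot Vs Vp → ℕ
  | .inl (_, j) => j
  | .inr (_, t) => t

/-- Two slots are adjacent when the overlap of length `w u v` along an edge `(u, v)` puts them
in the same place. -/
def slotGraph (E : Vs → Vp → Prop) (w : Vs → Vp → ℕ) : SimpleGraph (Slot Vs Vp) where
  Adj
    | .inl (u, j), .inr (v, t) | .inr (v, t), .inl (u, j) =>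
        E u v ∧ 1 ≤ j ∧ 1 ≤ t ∧ j + t = w u v + 1
    | _, _ => False
  symm := ⟨by rintro (⟨u, j⟩ | ⟨v, t⟩) (⟨u', j'⟩ | ⟨v', t'⟩) h <;> exact h⟩
  loopless := ⟨by rintro (⟨u, j⟩ | ⟨v, t⟩) h <;> exact h⟩

variable {E : Vs → Vp → Prop} {w : Vs → Vp → ℕ}

@[simp]
lemma slotGraph_adj_inl_inr {u : Vs} {v : Vp} {j t : ℕ} :
    (slotGraph E w).Adj (.inl (u, j)) (.inr (v, t)) ↔
      E u v ∧ 1 ≤ j ∧ 1 ≤ t ∧ j + t = w u v + 1 :=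
  Iff.rfl

@[simp]
lemma slotGraph_adj_inr_inl {u : Vs} {v : Vp} {j t : ℕ} :
    (slotGraph E w).Adj (.inr (v, t)) (.inl (u, j)) ↔
      E u v ∧ 1 ≤ j ∧ 1 ≤ t ∧ j + t = w u v + 1 :=
  Iff.rfl

@[simp]
lemma not_slotGraph_adj_inl_inl {u u' : Vs} {j j' : ℕ} :
    ¬ (slotGraph E w).Adj (.inl (u, j)) (.inl (u', j')) :=
  id

@[simp]
lemma not_slotGraph_adj_inr_inr {v v' : Vp} {t t' : ℕ} :
    ¬ (slotGraph E w).Adj (.inr (v, t)) (.inr (v', t')) :=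
  id

lemma isLeft_eq_not_of_slotGraph_adj {a b : Slot Vs Vp} (h : (slotGraph E w).Adj a b) :
    b.isLeft = !a.isLeft := by
  rcases a with ⟨u, j⟩ | ⟨v, t⟩ <;> rcases b with ⟨u', j'⟩ | ⟨v', t'⟩ <;> simp_all

/-- The three underlying edges form an induced `P₄` whose overlaps all contain the shared
position, which the strict `P₄`-rule forbids when the middle edge is the heaviest. -/
lemma slotIndex_lt_of_adj_adj_adj (hC : C4Free E) (hP4 : SatisfiesStrictP4Rule E w)
    {a b c d : Slot Vs Vp} (hab : (slotGraph E w).Adj a b) (hbc : (slotGraph E w).Adj b c)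
    (hcd : (slotGraph E w).Adj c d) (hac : a ≠ c) (hbd : b ≠ d)
    (h : slotIndex a ≤ slotIndex c) : slotIndex b < slotIndex d := by
  rcases a with ⟨u1, j1⟩ | ⟨q1, t1⟩ <;> rcases b with ⟨u2, j2⟩ | ⟨q2, t2⟩ <;>
    rcases c with ⟨u3, j3⟩ | ⟨q3, t3⟩ <;> rcases d with ⟨u4, j4⟩ | ⟨q4, t4⟩ <;>
    simp only [slotGraph_adj_inl_inr, slotGraph_adj_inr_inl, not_slotGraph_adj_inl_inl,
      not_slotGraph_adj_inr_inr, slotIndex, ne_eq, Sum.inl.injEq, Sum.inr.injEq, Prod.mk.injEq]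
      at hab hbc hcd hac hbd h ⊢
  · obtain ⟨e1, hab⟩ := hab
    obtain ⟨e2, hbc⟩ := hbc
    obtain ⟨e3, hcd⟩ := hcd
    by_contra! h4
    have hu : u1 ≠ u3 := by rintro rfl; exact hac ⟨rfl, by omega⟩
    have hq : q2 ≠ q4 := by rintro rfl; exact hbd ⟨rfl, by omega⟩
    have := add_lt_of_satisfiesStrictP4Rule hC hP4 hu hq e1 e2 e3 (by omega) (by omega)
    omega
  · obtain ⟨e1, hab⟩ := hab
    obtain ⟨e2, hbc⟩ := hbc
    obtain ⟨e3, hcd⟩ := hcd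
    by_contra! h4
    have hu : u4 ≠ u2 := by rintro rfl; exact hbd ⟨rfl, by omega⟩
    have hq : q3 ≠ q1 := by rintro rfl; exact hac ⟨rfl, by omega⟩
    have := add_lt_of_satisfiesStrictP4Rule hC hP4 hu hq e3 e2 e1 (by omega) (by omega)
    omega

/-- Once a path has taken a non-descending step `a - b - c`, every later step ascends. -/
lemma slotIndex_lt_of_isPath (hC : C4Free E) (hP4 : SatisfiesStrictP4Rule E w)
    {a b c τ : Slot Vs Vp} (hab : (slotGraph E w).Adj a b) (hbc : (slotGraph E w).Adj b c)
    (hac : a ≠ c) (h : slotIndex a ≤ slotIndex c) (p : (slotGraph E w).Walk c τ)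
    (hp : p.IsPath) (hb : b ∉ p.support) :
    (b.isLeft = τ.isLeft → slotIndex b < slotIndex τ) ∧
      (c.isLeft = τ.isLeft → slotIndex c ≤ slotIndex τ) := by
  induction p generalizing a b with
  | nil =>
    refine ⟨fun h' => ((Bool.eq_not_self b.isLeft).mp ?_).elim, fun _ => le_rfl⟩
    exact h'.trans (isLeft_eq_not_of_slotGraph_adj hbc)
  | @cons c d τ hcd p ih =>
    rw [SimpleGraph.Walk.cons_isPath_iff] at hp
    have hbd : b ≠ d := by rintro rfl; simp at hb
    have hbd' := slotIndex_lt_of_adj_adj_adj hC hP4 hab hbc hcd hac hbd h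
    obtain ⟨ih1, ih2⟩ := ih hbc hcd hbd hbd'.le hp.1 hp.2
    have hside : d.isLeft = b.isLeft := by
      rw [isLeft_eq_not_of_slotGraph_adj hcd, isLeft_eq_not_of_slotGraph_adj hbc, Bool.not_not]
    exact ⟨fun h' => hbd'.trans_le (ih2 (hside ▸ h')), fun h' => (ih1 h').le⟩

end Slots

section DecompositionToLabeling

variable {Vs Vp : Type*} {E : Vs → Vp → Prop} {w : Vs → Vp → ℕ}

/-- The path may not descend at its second step: for `J > 0` the edge of weight `J` at `u`
would complete an induced `P₄` violating the strict `P₄`-rule. So all its steps ascend. -/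
lemma exists_first_edge_of_isPath (hC : C4Free E) (hP4 : SatisfiesStrictP4Rule E w)
    {u : Vs} {v : Vp} {J t : ℕ} (hJ : J = 0 ∨ ∃ q, E u q ∧ w u q = J)
    (p : (slotGraph E w).Walk (.inl (u, J + 1)) (.inr (v, t))) (hp : p.IsPath) :
    ∃ q, E u q ∧ J < w u q ∧ (q = v ∨ w u q < J + t) := by
  cases p with
  | @cons _ σ₁ _ h₀ p =>
    rcases σ₁ with ⟨_, _⟩ | ⟨q, t₀⟩
    · exact absurd h₀ not_slotGraph_adj_inl_inl
    have ht₀ := h₀.2.2.1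
    have hq₀ := h₀.2.2.2
    refine ⟨q, h₀.1, by omega, ?_⟩
    cases p with
    | nil => exact Or.inl rfl
    | @cons _ σ₂ _ h₁ p =>
      rcases σ₂ with ⟨u₁, j₁⟩ | ⟨_, _⟩
      swap
      · exact absurd h₁ not_slotGraph_adj_inr_inr
      have hj₁ := h₁.2.1
      have hq₁ := h₁.2.2.2
      simp only [SimpleGraph.Walk.cons_isPath_iff, SimpleGraph.Walk.support_cons,
        List.mem_cons, not_or] at hp
      obtain ⟨⟨hp, hσ₁⟩, -, hσ₀⟩ := hp
      have h₀₂ : (.inl (u, J + 1) : Slot Vs Vp) ≠ .inl (u₁, j₁) := by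
        intro h
        exact hσ₀ (by rw [h]; exact p.start_mem_support)
      have hu₁ : u₁ ≠ u := by
        rintro rfl
        exact h₀₂ (by simp only [Sum.inl.injEq, Prod.mk.injEq, true_and]; omega)
      have hle : w u q ≤ w u₁ q := by
        by_contra! hlt
        rcases hJ with rfl | ⟨qb, eb, hb⟩
        · omega
        have hqb : q ≠ qb := by rintro rfl; omega
        have := add_lt_of_satisfiesStrictP4Rule hC hP4 hu₁ hqb h₁.1 h₀.1 eb hlt.le (by omega)
        omega
      have := (slotIndex_lt_of_isPath hC hP4 h₀ h₁ h₀₂ (by simp only [slotIndex]; omega) p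
        hp hσ₁).1 rfl
      simp only [slotIndex] at this
      omega

/-- `J` is the largest weight below `i` of an edge at `u`, so the `(J + 1)`-th last letter of `u`
lies only in overlaps of weight at least `i`. -/
theorem exists_not_reachable_of_not_adj (hC : C4Free E) (hP4 : SatisfiesStrictP4Rule E w)
    {u : Vs} {v : Vp} (huv : ¬ E u v) {i : ℕ} (hi : 1 ≤ i) :
    ∃ j t, 1 ≤ j ∧ 1 ≤ t ∧ j + t = i + 1 ∧
      ¬ (slotGraph E w).Reachable (.inl (u, j)) (.inr (v, t)) := by
  classical
  set J := Nat.findGreatest (fun a => ∃ q, E u q ∧ w u q = a) (i - 1)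
  have hJi : J < i := (Nat.findGreatest_le _).trans_lt (by omega)
  have hgap : ∀ q, E u q → w u q < i → w u q ≤ J := fun q hq hlt =>
    Nat.le_findGreatest (by omega) ⟨q, hq, rfl⟩
  have hJ : J = 0 ∨ ∃ q, E u q ∧ w u q = J :=
    (eq_or_ne J 0).imp_right (Nat.findGreatest_of_ne_zero rfl)
  refine ⟨J + 1, i - J, by omega, by omega, by omega, fun hR => ?_⟩
  obtain ⟨p, hp⟩ := hR.exists_isPath
  obtain ⟨q, huq, hJq, rfl | hlt⟩ := exists_first_edge_of_isPath hC hP4 hJ p hp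
  · exact huv huq
  · have := hgap q huq (by omega)
    omega

theorem exists_overlapLabeling [Countable Vs] [Countable Vp] (hC : C4Free E) {k : ℕ}
    (hD : IsDecomposition E k w) (hP4 : SatisfiesStrictP4Rule E w) :
    ∃ (ls : Vs → List ℕ) (lp : Vp → List ℕ), IsOverlapLabeling E k ls lp := by
  have : Countable (slotGraph E w).ConnectedComponent :=
    Function.Surjective.countable (f := (slotGraph E w).connectedComponentMk)
      fun c => c.exists_rep
  obtain ⟨f, hf⟩ := exists_injective_nat (slotGraph E w).ConnectedComponent
  set χ : Slot Vs Vp → ℕ := fun σ => f ((slotGraph E w).connectedComponentMk σ)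
  have hχ : ∀ σ σ', χ σ = χ σ' ↔ (slotGraph E w).Reachable σ σ' := fun _ _ =>
    hf.eq_iff.trans SimpleGraph.ConnectedComponent.eq
  refine ⟨fun u => List.ofFn fun m : Fin k => χ (.inl (u, k - m)),
    fun v => List.ofFn fun m : Fin k => χ (.inr (v, m + 1)), by simp, by simp, fun u v => ?_⟩
  simp only [overlapsBy_ofFn_iff (fun j => χ (.inl (u, j))) (fun t => χ (.inr (v, t))), hχ]
  constructor
  · intro huv
    exact ⟨w u v, (hD u v huv).1, (hD u v huv).2, fun j t hj ht hjt =>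
      (slotGraph_adj_inl_inr.2 ⟨huv, hj, ht, hjt⟩).reachable⟩
  · rintro ⟨i, hi, -, hR⟩
    by_contra huv
    obtain ⟨j, t, hj, ht, hjt, hnR⟩ := exists_not_reachable_of_not_adj hC hP4 huv hi
    exact hnR (hR j t hj ht hjt)

end DecompositionToLabeling

theorem statement4_general {Vs Vp : Type*} [Fintype Vs] [Fintype Vp] (E : Vs → Vp → Prop)
    (hC : C4Free E) :
    bReadability E ≤
        sInf {k | ∃ w : Vs → Vp → ℕ, IsDecomposition E k w ∧ SatisfiesStrictP4Rule E w} ∧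
      sInf {k | ∃ w : Vs → Vp → ℕ, IsDecomposition E k w ∧ SatisfiesStrictP4Rule E w} ≤
        2 * bReadability E - 1 := by
  obtain ⟨k, w, hw⟩ := exists_strictP4_decomposition E
  obtain ⟨w, hwD, hwP4⟩ := Nat.sInf_mem (s := {k | ∃ w : Vs → Vp → ℕ,
    IsDecomposition E k w ∧ SatisfiesStrictP4Rule E w}) ⟨k, w, hw⟩
  obtain ⟨ls, lp, hl⟩ := exists_overlapLabeling hC hwD hwP4
  refine ⟨Nat.sInf_le ⟨ls, lp, hl⟩, ?_⟩
  obtain ⟨ls, lp, hl⟩ := Nat.sInf_mem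
    (s := {r | ∃ (ls : Vs → List ℕ) (lp : Vp → List ℕ), IsOverlapLabeling E r ls lp})
    ⟨_, ls, lp, hl⟩
  exact Nat.sInf_le ⟨_, hl.isDecomposition, hl.satisfiesStrictP4Rule⟩

/-- For a `C₄`-free bipartite graph `G` with at least one edge, with
`t = min { k : some decomposition of size k satisfies the strict P4-rule }`, we have
`r(G) ≤ t` and `t ≤ 2·r(G) − 1` (hence `t/2 < r(G) ≤ t`). -/
theorem statement4 {Vs Vp : Type*} [Fintype Vs] [Fintype Vp] (E : Vs → Vp → Prop)
    (hC : C4Free E) (hE : ∃ u v, E u v) :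
    bReadability E ≤
        sInf {k | ∃ w : Vs → Vp → ℕ, IsDecomposition E k w ∧ SatisfiesStrictP4Rule E w} ∧
      sInf {k | ∃ w : Vs → Vp → ℕ, IsDecomposition E k w ∧ SatisfiesStrictP4Rule E w} ≤
        2 * bReadability E - 1 :=
  statement4_general E hC

end Readability
end

section
/- Let ℓ be an overlap labeling of a bipartite graph G = (V_s, V_p, E). Then the ℓ-decomposition of G satisfies the P4-rule; that is, for every induced P4 in G with consecutive edges e1, e2, e3, if ov_ℓ(e2) = max{ov_ℓ(e1), ov_ℓ(e2), ov_ℓ(e3)}, then ov_ℓ(e2) ≥ ov_ℓ(e1) + ov_ℓ(e3). -/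
namespace Readability

/-! Write `a, b, c` for the overlaps of the three edges, with `a, c ≤ b`. The length-`b` prefix
of `ℓ(p1)` is the length-`b` suffix of `ℓ(s2)`; inside this window the length-`a` suffix of
`ℓ(s1)` sits at the left end and the length-`c` prefix of `ℓ(p2)` at the right end. If
`b < a + c` these two pieces share `a + c - b` letters, so `ℓ(s1)` overlaps `ℓ(p2)` and
`(s1, p2)` would be an edge. -/

theorem overlapsBy_ov {α : Type*} {x y : List α} (h : ∃ i, OverlapsBy x y i) :
    OverlapsBy x y (ov x y) :=
  Nat.sInf_mem h

theorem OverlapsBy.zigzag_s5 {α : Type*} {x y z w : List α} {a b c : ℕ}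
    (hxy : OverlapsBy x y a) (hzy : OverlapsBy z y b) (hzw : OverlapsBy z w c)
    (hab : a ≤ b) (hcb : c ≤ b) (hlt : b < a + c) :
    OverlapsBy x w (a + c - b) := by
  obtain ⟨-, ha, hxy⟩ := hxy
  obtain ⟨-, hb, hzy⟩ := hzy
  obtain ⟨-, hc, hzw⟩ := hzw
  simp only [le_min_iff] at ha hb hc
  refine ⟨by omega, le_min (by omega) (by omega), ?_⟩
  calc x.drop (x.length - (a + c - b))
      = (x.drop (x.length - a)).drop (a - (a + c - b)) := by rw [List.drop_drop]; congr 1; omega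
    _ = ((y.take b).take a).drop (b - c) := by
        rw [hxy, List.take_take, min_eq_left hab]; congr 1; omega
    _ = (z.drop (z.length - c)).take (a + c - b) := by
        rw [← hzy, List.drop_take, List.drop_drop, show z.length - b + (b - c) = z.length - c by omega,
          show a - (b - c) = a + c - b by omega]
    _ = w.take (a + c - b) := by rw [hzw, List.take_take, min_eq_left (by omega)]

/-- If `ℓ = (ls, lp)` is an overlap labeling of a bipartite graph `G`, then the
`ℓ`-decomposition `e ↦ ov_ℓ(e)` satisfies the P4-rule. -/
theorem statement5 {Vs Vp : Type*} (E : Vs → Vp → Prop) (r : ℕ)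
    (ls : Vs → List ℕ) (lp : Vp → List ℕ) (h : IsOverlapLabeling E r ls lp) :
    SatisfiesP4Rule E (fun u v => ov (ls u) (lp v)) := by
  obtain ⟨-, -, hE⟩ := h
  have hov : ∀ u v, E u v → OverlapsBy (ls u) (lp v) (ov (ls u) (lp v)) :=
    fun u v huv => overlapsBy_ov ((hE u v).mp huv)
  rintro s1 s2 p1 p2 ⟨-, -, e1, e2, e3, hn⟩ hmax
  simp only at hmax
  by_contra! hlt
  exact hn ((hE s1 p2).mpr ⟨_, (hov _ _ e1).zigzag_s5 (hov _ _ e2) (hov _ _ e3)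
    (by omega) (by omega) hlt⟩)

end Readability
end

section
/- Let G = (V_s, V_p, E) be a bipartite graph whose underlying undirected graph on V_s ⊔ V_p is acyclic (a forest), and let w : E → {1,…,k} be a decomposition of G satisfying the P4-rule. Then there exists an overlap labeling ℓ of G of length k such that for every edge e ∈ E, the minimum overlap ov_ℓ(e) equals w(e). In particular, r(G) ≤ k. -/
/-!
Give every vertex `k` positions, counted from the right end of the label for `Vs` and from the
left end for `Vp`. An edge of weight `m` identifies position `t` of one endpoint with position
`m + 1 - t` of the other (`1 ≤ t ≤ m`); taking the symbols to be the classes of the generated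
equivalence, every edge becomes an overlap of length exactly its weight.

Conversely, an overlap of length `i` between `u` and `v` identifies position `1` of `u` with
position `i` of `v` and position `i` with position `1`. Each identification is a chain of
transfers along a walk, which in a forest shortens to the unique `u`–`v` path. If this path had
at least three edges, the first chain would force its weights to rise at the start and the
second to fall at the end, so there would be a peak `a ≤ b ≥ c`; the P4-rule gives `a + c ≤ b`,
whereas a chain crossing the peak needs `b < a + c`. So the path is the edge `uv` and
`i = w(u, v)`.
-/


namespace Readability

open SimpleGraph Sum Relation

lemma exists_peak (f : ℕ → ℕ) (r : ℕ) (hrise : f 0 ≤ f 1) (hfall : f (r + 2) ≤ f (r + 1)) :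
    ∃ n ≤ r, f n ≤ f (n + 1) ∧ f (n + 2) ≤ f (n + 1) := by
  induction r generalizing f with
  | zero => exact ⟨0, le_rfl, hrise, hfall⟩
  | succ r ih =>
    by_cases h : f 2 ≤ f 1
    · exact ⟨0, by omega, hrise, h⟩
    · obtain ⟨n, hn, h₁, h₂⟩ := ih (fun n => f (n + 1)) (le_of_not_ge h) hfall
      exact ⟨n + 1, by omega, h₁, h₂⟩

lemma List.drop_eq_getD_cons {L : List ℕ} {n : ℕ} (h : n < L.length) :
    L.drop n = L.getD n 0 :: L.drop (n + 1) := by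
  rw [List.drop_eq_getElem_cons h, List.getD_eq_getElem]

/-- Along an overlap of length `m`, position `t` counted from the right end of the left string
and position `m + 1 - t` counted from the left end of the right string hold the same symbol.
`IsTransferChain L t j`: starting at position `t`, this transfer is possible through overlaps of
lengths `L` in turn, ending at position `j`. -/
def IsTransferChain : List ℕ → ℕ → ℕ → Prop
  | [], t, j => j = t
  | m :: L, t, j => 1 ≤ t ∧ t ≤ m ∧ IsTransferChain L (m + 1 - t) j

namespace IsTransferChain

@[simp] lemma nil_iff {t j : ℕ} : IsTransferChain [] t j ↔ j = t := Iff.rfl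

@[simp] lemma cons_iff {m t j : ℕ} {L : List ℕ} :
    IsTransferChain (m :: L) t j ↔ 1 ≤ t ∧ t ≤ m ∧ IsTransferChain L (m + 1 - t) j := Iff.rfl

lemma append_iff {L₁ L₂ : List ℕ} {t j : ℕ} :
    IsTransferChain (L₁ ++ L₂) t j ↔ ∃ s, IsTransferChain L₁ t s ∧ IsTransferChain L₂ s j := by
  induction L₁ generalizing t with
  | nil => simp
  | cons m L ih => simp [ih, and_assoc]

lemma singleton_iff {m t j : ℕ} : IsTransferChain [m] t j ↔ 1 ≤ t ∧ t ≤ m ∧ j = m + 1 - t := by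
  simp

lemma drop {L : List ℕ} {t j : ℕ} (h : IsTransferChain L t j) (n : ℕ) :
    ∃ s, IsTransferChain (L.drop n) s j := by
  rw [← L.take_append_drop n, append_iff] at h
  obtain ⟨s, -, hs⟩ := h
  exact ⟨s, hs⟩

lemma le_of_start_one {a b j : ℕ} {L : List ℕ} (h : IsTransferChain (a :: b :: L) 1 j) :
    a ≤ b := by
  obtain ⟨-, -, -, h, -⟩ := h
  omega

lemma le_of_end_one {a b t : ℕ} (h : IsTransferChain [a, b] t 1) : b ≤ a := by
  simp only [cons_iff, nil_iff] at h
  omega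

lemma lt_add {a b c s j : ℕ} {L : List ℕ} (h : IsTransferChain (a :: b :: c :: L) s j) :
    b < a + c := by
  obtain ⟨h₁, h₂, h₃, h₄, h₅, h₆, -⟩ := h
  omega

lemma exists_peak_lt_add {L : List ℕ} {i j : ℕ} (h₁ : IsTransferChain L 1 i)
    (h₂ : IsTransferChain L j 1) (hL : 3 ≤ L.length) :
    ∃ n, n + 2 < L.length ∧ L.getD n 0 ≤ L.getD (n + 1) 0 ∧
      L.getD (n + 2) 0 ≤ L.getD (n + 1) 0 ∧ L.getD (n + 1) 0 < L.getD n 0 + L.getD (n + 2) 0 := by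
  obtain ⟨r, hr⟩ : ∃ r, L.length = r + 3 := ⟨L.length - 3, by omega⟩
  have hrise : L.getD 0 0 ≤ L.getD 1 0 := by
    rw [← L.drop_zero, List.drop_eq_getD_cons (by omega), List.drop_eq_getD_cons (by omega)] at h₁
    exact h₁.le_of_start_one
  have hfall : L.getD (r + 2) 0 ≤ L.getD (r + 1) 0 := by
    obtain ⟨s, hs⟩ := h₂.drop (r + 1)
    rw [List.drop_eq_getD_cons (by omega), List.drop_eq_getD_cons (by omega),
      List.drop_of_length_le (by omega)] at hs
    exact hs.le_of_end_one
  obtain ⟨n, hn, hup, hdown⟩ := exists_peak (fun n => L.getD n 0) r hrise hfall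
  obtain ⟨s, hs⟩ := h₁.drop n
  rw [List.drop_eq_getD_cons (by omega), List.drop_eq_getD_cons (by omega),
    List.drop_eq_getD_cons (by omega)] at hs
  exact ⟨n, by omega, hup, hdown, hs.lt_add⟩

end IsTransferChain

section Forest

variable {Vs Vp : Type*} {E : Vs → Vp → Prop} {w : Vs → Vp → ℕ}

@[simp] lemma underlyingGraph_adj_inl_inr {u : Vs} {v : Vp} :
    (underlyingGraph E).Adj (inl u) (inr v) ↔ E u v := by
  simp [underlyingGraph]

@[simp] lemma underlyingGraph_adj_inr_inl {u : Vs} {v : Vp} :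
    (underlyingGraph E).Adj (inr v) (inl u) ↔ E u v := by
  simp [underlyingGraph]

@[simp] lemma not_underlyingGraph_adj_inl_inl {u u' : Vs} :
    ¬ (underlyingGraph E).Adj (inl u) (inl u') := by
  simp [underlyingGraph]

@[simp] lemma not_underlyingGraph_adj_inr_inr {v v' : Vp} :
    ¬ (underlyingGraph E).Adj (inr v) (inr v') := by
  simp [underlyingGraph]

def edgeWeight (w : Vs → Vp → ℕ) : Vs ⊕ Vp → Vs ⊕ Vp → ℕ
  | inl u, inr v => w u v
  | inr v, inl u => w u v
  | _, _ => 0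

@[simp] lemma edgeWeight_inl_inr (u : Vs) (v : Vp) : edgeWeight w (inl u) (inr v) = w u v := rfl

@[simp] lemma edgeWeight_inr_inl (u : Vs) (v : Vp) : edgeWeight w (inr v) (inl u) = w u v := rfl

lemma edgeWeight_comm (w : Vs → Vp → ℕ) (x y : Vs ⊕ Vp) : edgeWeight w x y = edgeWeight w y x := by
  cases x <;> cases y <;> rfl

lemma SatisfiesP4Rule.edgeWeight_add_le (hP : SatisfiesP4Rule E w) {a b c d : Vs ⊕ Vp}
    (hab : (underlyingGraph E).Adj a b) (hbc : (underlyingGraph E).Adj b c)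
    (hcd : (underlyingGraph E).Adj c d) (hac : a ≠ c) (hbd : b ≠ d)
    (had : ¬ (underlyingGraph E).Adj a d)
    (h₁ : edgeWeight w a b ≤ edgeWeight w b c) (h₂ : edgeWeight w c d ≤ edgeWeight w b c) :
    edgeWeight w a b + edgeWeight w c d ≤ edgeWeight w b c := by
  rcases a with s₁ | p₂ <;> rcases b with s₂ | p₁ <;> rcases c with s₃ | p₃ <;>
    rcases d with s₄ | p₄ <;>
    simp only [underlyingGraph_adj_inl_inr, underlyingGraph_adj_inr_inl,
      not_underlyingGraph_adj_inl_inl, not_underlyingGraph_adj_inr_inr, ne_eq, inl.injEq,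
      inr.injEq, edgeWeight_inl_inr, edgeWeight_inr_inl] at hab hbc hcd hac hbd had h₁ h₂ ⊢
  · exact hP s₁ s₃ p₁ p₄ ⟨hac, hbd, hab, hbc, hcd, had⟩ (by omega)
  · have := hP s₄ s₂ p₃ p₂ ⟨Ne.symm hbd, Ne.symm hac, hcd, hbc, hab, had⟩ (by omega)
    omega

def walkWeights (w : Vs → Vp → ℕ) {x y : Vs ⊕ Vp} (P : (underlyingGraph E).Walk x y) : List ℕ :=
  P.darts.map fun d => edgeWeight w d.fst d.snd

@[simp] lemma walkWeights_cons {x z y : Vs ⊕ Vp} (h : (underlyingGraph E).Adj x z)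
    (P : (underlyingGraph E).Walk z y) :
    walkWeights w (.cons h P) = edgeWeight w x z :: walkWeights w P := rfl

@[simp] lemma length_walkWeights {x y : Vs ⊕ Vp} (P : (underlyingGraph E).Walk x y) :
    (walkWeights w P).length = P.length := by
  simp [walkWeights]

lemma walkWeights_getD {x y : Vs ⊕ Vp} (P : (underlyingGraph E).Walk x y) {n : ℕ}
    (hn : n < P.length) :
    (walkWeights w P).getD n 0 = edgeWeight w (P.getVert n) (P.getVert (n + 1)) := by
  simp [walkWeights, Walk.darts_getElem_eq_getVert, hn]

lemma SatisfiesP4Rule.edgeWeight_add_le_of_isPath (hP : SatisfiesP4Rule E w)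
    (hA : (underlyingGraph E).IsAcyclic) {x y : Vs ⊕ Vp} {P : (underlyingGraph E).Walk x y}
    (hp : P.IsPath) {n : ℕ} (hn : n + 3 ≤ P.length)
    (h₁ : edgeWeight w (P.getVert n) (P.getVert (n + 1)) ≤
      edgeWeight w (P.getVert (n + 1)) (P.getVert (n + 2)))
    (h₂ : edgeWeight w (P.getVert (n + 2)) (P.getVert (n + 3)) ≤
      edgeWeight w (P.getVert (n + 1)) (P.getVert (n + 2))) :
    edgeWeight w (P.getVert n) (P.getVert (n + 1)) +
      edgeWeight w (P.getVert (n + 2)) (P.getVert (n + 3)) ≤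
      edgeWeight w (P.getVert (n + 1)) (P.getVert (n + 2)) := by
  have hinj {a b : ℕ} (ha : a ≤ n + 3) (hb : b ≤ n + 3) (h : P.getVert a = P.getVert b) :
      a = b :=
    hp.getVert_injOn (by simp only [Set.mem_ofPred_eq]; omega)
      (by simp only [Set.mem_ofPred_eq]; omega) h
  have hnadj : ¬ (underlyingGraph E).Adj (P.getVert n) (P.getVert (n + 3)) := fun hadj => by
    have hmem : P.getVert (n + 3) ∈ (P.drop n).support := by
      rw [← Walk.drop_getVert]; exact Walk.getVert_mem_support _ _
    have h31 := hA.eq_snd_of_adj_start (hp.drop n) hadj hmem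
    rw [Walk.snd, Walk.drop_getVert] at h31
    exact absurd (hinj le_rfl (by omega) h31) (by omega)
  exact hP.edgeWeight_add_le (P.adj_getVert_succ (by omega)) (P.adj_getVert_succ (by omega))
    (P.adj_getVert_succ (by omega)) (fun h => absurd (hinj (by omega) (by omega) h) (by omega))
    (fun h => absurd (hinj (by omega) (by omega) h) (by omega)) hnadj h₁ h₂

lemma SatisfiesP4Rule.length_lt_three_of_isTransferChain (hP : SatisfiesP4Rule E w)
    (hA : (underlyingGraph E).IsAcyclic) {x y : Vs ⊕ Vp} {P : (underlyingGraph E).Walk x y}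
    (hp : P.IsPath) {i j : ℕ} (h₁ : IsTransferChain (walkWeights w P) 1 i)
    (h₂ : IsTransferChain (walkWeights w P) j 1) : P.length < 3 := by
  by_contra! hlen
  obtain ⟨n, hn, hup, hdown, hlt⟩ := h₁.exists_peak_lt_add h₂ (by simpa using hlen)
  rw [length_walkWeights] at hn
  simp only [walkWeights_getD P (show n < P.length by omega),
    walkWeights_getD P (show n + 1 < P.length by omega),
    walkWeights_getD P (show n + 2 < P.length by omega), Nat.add_assoc, Nat.reduceAdd]
    at hup hdown hlt
  have := hP.edgeWeight_add_le_of_isPath hA hp (by omega) hup hdown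
  omega

lemma SatisfiesP4Rule.eq_of_isTransferChain (hP : SatisfiesP4Rule E w)
    (hA : (underlyingGraph E).IsAcyclic) {u : Vs} {v : Vp}
    {P : (underlyingGraph E).Walk (inl u) (inr v)} (hp : P.IsPath) {i : ℕ}
    (h₁ : IsTransferChain (walkWeights w P) 1 i) (h₂ : IsTransferChain (walkWeights w P) i 1) :
    E u v ∧ w u v = i := by
  have hlen : P.length = 1 := by
    have := hP.length_lt_three_of_isTransferChain hA hp h₁ h₂
    interval_cases h : P.length
    · exact absurd (Walk.eq_of_length_eq_zero h) (by simp)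
    · rfl
    · have h01 := P.adj_getVert_succ (i := 0) (by omega)
      have h12 := P.adj_getVert_succ (i := 1) (by omega)
      rw [Walk.getVert_zero] at h01
      rw [show 1 + 1 = P.length by omega, Walk.getVert_length] at h12
      generalize P.getVert 1 = c at h01 h12
      cases c <;> simp at h01 h12
  obtain ⟨m, hm⟩ := List.length_eq_one_iff.mp ((length_walkWeights P).trans hlen)
  have hwm : w u v = m := by
    have h0 := walkWeights_getD (w := w) P (n := 0) (by omega)
    rw [Walk.getVert_zero, show 0 + 1 = P.length by omega, Walk.getVert_length, hm] at h0
    simpa using h0.symm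
  rw [hm, IsTransferChain.singleton_iff] at h₁
  exact ⟨by simpa using Walk.adj_of_length_eq_one hlen, by omega⟩

variable (E w) in
/-- Positions `(x, t)` that the overlap along an edge forces to carry the same symbol. -/
def Transfer (a b : (Vs ⊕ Vp) × ℕ) : Prop :=
  (underlyingGraph E).Adj a.1 b.1 ∧ IsTransferChain [edgeWeight w a.1 b.1] a.2 b.2

instance : Std.Symm (Transfer E w) where
  symm a b h := ⟨h.1.symm, by
    have h₂ := h.2
    rw [edgeWeight_comm w b.1 a.1]
    rw [IsTransferChain.singleton_iff] at h₂ ⊢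
    omega⟩

lemma isTransferChain_walkWeights_cons {x z y : Vs ⊕ Vp} (h : (underlyingGraph E).Adj x z)
    (P : (underlyingGraph E).Walk z y) {t j : ℕ} :
    IsTransferChain (walkWeights w (.cons h P)) t j ↔
      ∃ s, Transfer E w (x, t) (z, s) ∧ IsTransferChain (walkWeights w P) s j := by
  rw [walkWeights_cons, ← List.singleton_append, IsTransferChain.append_iff]
  simp only [Transfer, h, true_and]

lemma exists_walk_of_reflTransGen {a b : (Vs ⊕ Vp) × ℕ}
    (h : ReflTransGen (Transfer E w) a b) :
    ∃ W : (underlyingGraph E).Walk a.1 b.1, IsTransferChain (walkWeights w W) a.2 b.2 := by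
  induction h using Relation.ReflTransGen.head_induction_on with
  | refl => exact ⟨.nil, rfl⟩
  | head hac _ ih =>
    obtain ⟨W, hW⟩ := ih
    exact ⟨.cons hac.1 W, (isTransferChain_walkWeights_cons hac.1 W).2 ⟨_, hac, hW⟩⟩

lemma Transfer.eq_of_transfer {x z : Vs ⊕ Vp} {t s t' : ℕ} (h : Transfer E w (x, t) (z, s))
    (h' : Transfer E w (z, s) (x, t')) : t' = t := by
  obtain ⟨-, h₁⟩ := h
  obtain ⟨-, h₂⟩ := h'
  simp only [IsTransferChain.singleton_iff] at h₁ h₂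
  rw [edgeWeight_comm w z x] at h₂
  omega

lemma exists_isPath_of_isTransferChain (hA : (underlyingGraph E).IsAcyclic) {x y : Vs ⊕ Vp}
    (W : (underlyingGraph E).Walk x y) {t j : ℕ} (h : IsTransferChain (walkWeights w W) t j) :
    ∃ P : (underlyingGraph E).Walk x y, P.IsPath ∧ IsTransferChain (walkWeights w P) t j := by
  classical
  induction W generalizing t with
  | nil => exact ⟨.nil, .nil, h⟩
  | @cons x z y hxz W ih =>
    obtain ⟨s, hts, hW⟩ := (isTransferChain_walkWeights_cons hxz W).1 h
    obtain ⟨P, hP, hsj⟩ := ih hW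
    by_cases hx : x ∈ P.support
    · -- in a forest `P` returns to `x` along the edge just used, undoing the transfer
      obtain ⟨p₀, p₁, hp₀, hp₁, rfl⟩ := hP.mem_support_iff_exists_append.mp hx
      obtain rfl : p₀ = .cons hxz.symm .nil :=
        Subtype.mk.inj ((hA.subsingleton_path z x).elim ⟨p₀, hp₀⟩ (.singleton hxz.symm))
      obtain ⟨t', hst', ht'j⟩ := (isTransferChain_walkWeights_cons hxz.symm p₁).1 hsj
      exact ⟨p₁, hp₁, hts.eq_of_transfer hst' ▸ ht'j⟩
    · exact ⟨.cons hxz P, hP.cons hx, (isTransferChain_walkWeights_cons hxz P).2 ⟨s, hts, hsj⟩⟩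

lemma SatisfiesP4Rule.eq_of_reflTransGen (hP : SatisfiesP4Rule E w)
    (hA : (underlyingGraph E).IsAcyclic) {u : Vs} {v : Vp} {i : ℕ}
    (h₁ : ReflTransGen (Transfer E w) (inl u, 1) (inr v, i))
    (h₂ : ReflTransGen (Transfer E w) (inl u, i) (inr v, 1)) : E u v ∧ w u v = i := by
  obtain ⟨W₁, hW₁⟩ := exists_walk_of_reflTransGen h₁
  obtain ⟨P₁, hP₁, hc₁⟩ := exists_isPath_of_isTransferChain hA W₁ hW₁
  obtain ⟨W₂, hW₂⟩ := exists_walk_of_reflTransGen h₂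
  obtain ⟨P₂, hP₂, hc₂⟩ := exists_isPath_of_isTransferChain hA W₂ hW₂
  obtain rfl : P₂ = P₁ :=
    Subtype.mk.inj ((hA.subsingleton_path _ _).elim ⟨P₂, hP₂⟩ ⟨P₁, hP₁⟩)
  exact hP.eq_of_isTransferChain hA hP₁ hc₁ hc₂

end Forest

lemma List.drop_map_range_eq_take_map_range_iff {α : Type*} (f g : ℕ → α) {i k : ℕ}
    (hik : i ≤ k) :
    ((List.range k).map f).drop (k - i) = ((List.range k).map g).take i ↔
      ∀ n < i, f (k - i + n) = g n := by
  simp only [List.ext_getElem_iff, List.length_drop, List.length_take, List.length_map,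
    List.length_range, List.getElem_drop, List.getElem_take, List.getElem_map,
    List.getElem_range]
  exact ⟨fun h n hn => h.2 n (by omega) (by omega),
    fun h => ⟨by omega, fun n _ hn => h n (by omega)⟩⟩

section Labeling

variable {Vs Vp : Type*}

/-- Position `t` of the label of `u : Vs` is counted from its right end, position `t` of the
label of `v : Vp` from its left end; both labels read off the symbols `sym (x, t)`. -/
def labelS (sym : (Vs ⊕ Vp) × ℕ → ℕ) (k : ℕ) (u : Vs) : List ℕ :=
  (List.range k).map fun n => sym (inl u, k - n)

def labelP (sym : (Vs ⊕ Vp) × ℕ → ℕ) (k : ℕ) (v : Vp) : List ℕ :=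
  (List.range k).map fun n => sym (inr v, n + 1)

lemma overlapsBy_labelS_labelP_iff {sym : (Vs ⊕ Vp) × ℕ → ℕ} {k i : ℕ} {u : Vs} {v : Vp} :
    OverlapsBy (labelS sym k u) (labelP sym k v) i ↔
      1 ≤ i ∧ i ≤ k ∧ ∀ n < i, sym (inl u, i - n) = sym (inr v, n + 1) := by
  simp only [OverlapsBy, labelS, labelP, List.length_map, List.length_range, min_self]
  refine and_congr_right fun _ => and_congr_right fun hik => ?_
  rw [List.drop_map_range_eq_take_map_range_iff _ _ hik]
  refine forall₂_congr fun n _ => ?_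
  rw [show k - (k - i + n) = i - n by omega]

end Labeling

theorem exists_labels_overlapsBy_iff {Vs Vp : Type*} [Countable Vs] [Countable Vp]
    {E : Vs → Vp → Prop} {w : Vs → Vp → ℕ} {k : ℕ} (hA : (underlyingGraph E).IsAcyclic)
    (hw : IsDecomposition E k w) (hP : SatisfiesP4Rule E w) :
    ∃ (ls : Vs → List ℕ) (lp : Vp → List ℕ), (∀ u, (ls u).length = k) ∧
      (∀ v, (lp v).length = k) ∧ ∀ u v i, OverlapsBy (ls u) (lp v) i ↔ E u v ∧ w u v = i := by
  obtain ⟨f, hf⟩ := exists_injective_nat (Quot (Transfer E w))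
  set sym : (Vs ⊕ Vp) × ℕ → ℕ := fun a => f (Quot.mk _ a)
  have hsym (a b) : sym a = sym b ↔ ReflTransGen (Transfer E w) a b := by
    rw [← EqvGen.eqvGen_eq_reflTransGen]
    exact ⟨fun h => Quot.eqvGen_exact (hf h), fun h => congrArg f (Quot.eqvGen_sound h)⟩
  refine ⟨labelS sym k, labelP sym k, by simp [labelS], by simp [labelP], fun u v i => ?_⟩
  rw [overlapsBy_labelS_labelP_iff]
  constructor
  · rintro ⟨hi, -, h⟩
    have h₁ := (hsym _ _).1 (h (i - 1) (by omega))
    have h₂ := (hsym _ _).1 (h 0 (by omega))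
    rw [show i - (i - 1) = 1 by omega, Nat.sub_add_cancel hi] at h₁
    exact hP.eq_of_reflTransGen hA h₁ h₂
  · rintro ⟨huv, rfl⟩
    obtain ⟨hw₁, hwk⟩ := hw u v huv
    refine ⟨hw₁, hwk, fun n hn => (hsym _ _).2 (.single ⟨by simpa using huv, ?_⟩)⟩
    simp only [edgeWeight_inl_inr, IsTransferChain.singleton_iff]
    omega

/-- If the underlying undirected graph of the bipartite graph `G` is acyclic (a
forest) and `w : E → {1,…,k}` is a decomposition satisfying the P4-rule, then there is an
overlap labeling `ℓ` of `G` of length `k` with `ov_ℓ(e) = w(e)` on every edge; in particular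
`r(G) ≤ k`. -/
theorem statement7 {Vs Vp : Type*} [Fintype Vs] [Fintype Vp] (E : Vs → Vp → Prop)
    (hA : (underlyingGraph E).IsAcyclic) (k : ℕ) (w : Vs → Vp → ℕ)
    (hw : IsDecomposition E k w) (hP : SatisfiesP4Rule E w) :
    (∃ (ls : Vs → List ℕ) (lp : Vp → List ℕ), IsOverlapLabeling E k ls lp ∧
        ∀ u v, E u v → ov (ls u) (lp v) = w u v) ∧
      bReadability E ≤ k := by
  obtain ⟨ls, lp, hls, hlp, hov⟩ := exists_labels_overlapsBy_iff hA hw hP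
  have hlab : IsOverlapLabeling E k ls lp :=
    ⟨hls, hlp, fun u v => ⟨fun huv => ⟨w u v, (hov u v _).2 ⟨huv, rfl⟩⟩,
      fun ⟨i, hi⟩ => ((hov u v i).1 hi).1⟩⟩
  refine ⟨⟨ls, lp, hlab, fun u v huv => ?_⟩, Nat.sInf_le ⟨ls, lp, hlab⟩⟩
  have hset : {i | OverlapsBy (ls u) (lp v) i} = {w u v} := by
    ext i
    simp [hov, huv, eq_comm]
  rw [ov, hset, csInf_singleton]

end Readability
end

section
/- Let ℓ be an overlap labeling of a bipartite graph G = (V_s, V_p, E). Then the ℓ-decomposition of G satisfies the HUB-rule: (i) for every i ≥ 1, the subgraph G_i with edge set {e ∈ E : ov_ℓ(e) = i} is a disjoint union of bicliques (equivalently, whenever (s1,p1), (s2,p1), (s2,p2) are edges of G_i, so is (s1,p2)); and (ii) whenever two distinct vertices u, v in the same part are non-isolated twins in G_i for some i ≥ 2, then u and v are twins in G_j for every j with 1 ≤ j ≤ i−1. -/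
/-! If `ℓ(u)` and `ℓ(u')` both overlap `ℓ(p)` by `i`, they share their suffix of length `i`, so
they overlap every string by every `k ≤ i` alike; hence their minimal overlaps with any string
agree as soon as one of them is at most `i`. With `k = i` this closes every `P₄` of the level
graph `G_i`, and with `k < i` it makes non-isolated twins of `G_i` twins in every lower level.
Prefixes play the same role for the other part. -/

namespace Readability

lemma List.drop_length_sub_eq_drop_drop {α : Type*} {x : List α} {i k : ℕ} (hk : k ≤ i)
    (hi : i ≤ x.length) : x.drop (x.length - k) = (x.drop (x.length - i)).drop (i - k) := by
  rw [List.drop_drop]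
  congr 1
  omega

section Overlap

variable {α : Type*} {x x' y y' z : List α} {i j k : ℕ}

/-- Two strings overlapping the same string by `i` share their suffix of length `i`. -/
theorem OverlapsBy.overlapsBy_iff_left (hx : OverlapsBy x y i) (hx' : OverlapsBy x' y i)
    (hk : k ≤ i) : OverlapsBy x z k ↔ OverlapsBy x' z k := by
  suffices key : ∀ {x x' : List α}, OverlapsBy x y i → OverlapsBy x' y i →
      OverlapsBy x z k → OverlapsBy x' z k from ⟨key hx hx', key hx' hx⟩
  intro x x' ⟨_, hix, hxy⟩ ⟨_, hix', hx'y⟩ ⟨hk1, hkz, hxz⟩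
  refine ⟨hk1, by omega, ?_⟩
  rw [List.drop_length_sub_eq_drop_drop hk (by omega), hx'y, ← hxy,
    ← List.drop_length_sub_eq_drop_drop hk (by omega), hxz]

/-- Two strings overlapped by the same string by `i` share their prefix of length `i`. -/
theorem OverlapsBy.overlapsBy_iff_right (hy : OverlapsBy x y i) (hy' : OverlapsBy x y' i)
    (hk : k ≤ i) : OverlapsBy z y k ↔ OverlapsBy z y' k := by
  suffices key : ∀ {y y' : List α}, OverlapsBy x y i → OverlapsBy x y' i →
      OverlapsBy z y k → OverlapsBy z y' k from ⟨key hy hy', key hy' hy⟩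
  intro y y' ⟨_, hiy, hxy⟩ ⟨_, hiy', hxy'⟩ ⟨hk1, hkz, hzy⟩
  refine ⟨hk1, by omega, ?_⟩
  rw [hzy, ← min_eq_left hk, ← List.take_take, ← List.take_take, ← hxy, hxy']

theorem ov_eq_iff (hj : 1 ≤ j) :
    ov x y = j ↔ OverlapsBy x y j ∧ ∀ k < j, ¬ OverlapsBy x y k := by
  constructor
  · rintro rfl
    have hne : {i | OverlapsBy x y i}.Nonempty :=
      Set.nonempty_iff_ne_empty.2 fun h => by simp [ov, h] at hj
    exact ⟨Nat.sInf_mem hne, fun k hk => Nat.notMem_of_lt_sInf hk⟩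
  · rintro ⟨hov, hmin⟩
    exact le_antisymm (Nat.sInf_le hov) (not_lt.1 fun hlt => hmin _ hlt
      (Nat.sInf_mem (s := {i | OverlapsBy x y i}) ⟨j, hov⟩))

theorem ov_eq_iff_of_forall_le (hj : 1 ≤ j)
    (h : ∀ k ≤ j, OverlapsBy x y k ↔ OverlapsBy x' y' k) : ov x y = j ↔ ov x' y' = j := by
  rw [ov_eq_iff hj, ov_eq_iff hj, h j le_rfl]
  exact and_congr_right' (forall₂_congr fun k hk => not_congr (h k hk.le))

theorem ov_eq_iff_of_ov_eq_left (hx : ov x y = i) (hx' : ov x' y = i) (hj : 1 ≤ j)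
    (hji : j ≤ i) : ov x z = j ↔ ov x' z = j := by
  have hi : 1 ≤ i := hj.trans hji
  exact ov_eq_iff_of_forall_le hj fun k hk => (((ov_eq_iff hi).1 hx).1.overlapsBy_iff_left
    ((ov_eq_iff hi).1 hx').1 (hk.trans hji))

theorem ov_eq_iff_of_ov_eq_right (hy : ov x y = i) (hy' : ov x y' = i) (hj : 1 ≤ j)
    (hji : j ≤ i) : ov z y = j ↔ ov z y' = j := by
  have hi : 1 ≤ i := hj.trans hji
  exact ov_eq_iff_of_forall_le hj fun k hk => (((ov_eq_iff hi).1 hy).1.overlapsBy_iff_right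
    ((ov_eq_iff hi).1 hy').1 (hk.trans hji))

end Overlap

theorem IsOverlapLabeling.subAt_iff {α Vs Vp : Type*} {E : Vs → Vp → Prop} {r : ℕ}
    {ls : Vs → List α} {lp : Vp → List α} (h : IsOverlapLabeling E r ls lp) {j : ℕ}
    (hj : 1 ≤ j) {u : Vs} {v : Vp} :
    SubAt E (fun u v => ov (ls u) (lp v)) j u v ↔ ov (ls u) (lp v) = j :=
  ⟨And.right, fun hov => ⟨(h.2.2 u v).2 ⟨j, ((ov_eq_iff hj).1 hov).1⟩, hov⟩⟩

/-- If `ℓ = (ls, lp)` is an overlap labeling of a bipartite graph `G`, then the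
`ℓ`-decomposition `e ↦ ov_ℓ(e)` satisfies the HUB-rule: every level graph `G_i` (edges of
minimum overlap exactly `i`) is a disjoint union of bicliques, and non-isolated twins in a
level `G_i` with `i ≥ 2` are twins in all lower levels. -/
theorem statement8 {Vs Vp : Type*} (E : Vs → Vp → Prop) (r : ℕ)
    (ls : Vs → List ℕ) (lp : Vp → List ℕ) (h : IsOverlapLabeling E r ls lp) :
    SatisfiesHUBRule E (fun u v => ov (ls u) (lp v)) := by
  refine ⟨?_, ?_, ?_⟩
  · intro i hi s1 s2 p1 p2 h11 h21 h22
    rw [h.subAt_iff hi] at h11 h21 h22 ⊢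
    exact (ov_eq_iff_of_ov_eq_left h11 h21 hi le_rfl).2 h22
  · rintro i hi u v - ⟨p, hu⟩ htwin j hj hji q
    have hv := (htwin p).1 hu
    rw [h.subAt_iff (by omega)] at hu hv
    rw [h.subAt_iff hj, h.subAt_iff hj]
    exact ov_eq_iff_of_ov_eq_left hu hv hj (by omega)
  · rintro i hi u v - ⟨s, hu⟩ htwin j hj hji q
    have hv := (htwin s).1 hu
    rw [h.subAt_iff (by omega)] at hu hv
    rw [h.subAt_iff hj, h.subAt_iff hj]
    exact ov_eq_iff_of_ov_eq_right hu hv hj (by omega)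

end Readability
end
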